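/- arXiv:2107.12094 — 5 statements merged into one kernel-verified Lean document; each statement's English description precedes it below -/
import Mathlib

section
/- Let $f:\mathbb{R}\to(0,\infty)$ be a log-concave probability density function. Then the cumulative distribution function $F(x)=\int_{-\infty}^x f(y)\,dy$ is log-concave, i.e., $\log F$ is a concave function on $\mathbb{R}$. -/
open Set MeasureTheory

/-!
Since `F' = f`, the derivative of `log F` is `f / F`, so it suffices that `f / F` is antitone,
i.e. `f y * F x ≤ f x * F y` for `x ≤ y`. Writing `F y = ∫_{t ≤ x} f (t + (y - x)) dt`, this
follows by integrating the pointwise bound `f y * f t ≤ f x * f (t + (y - x))` for `t ≤ x`, which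
is log-concavity of `f`: the increments of a concave function over intervals of a fixed length
decrease as the interval moves right.
-/

theorem ConcaveOn.add_sub_le_add_sub {𝕜 : Type*} [Field 𝕜] [LinearOrder 𝕜] [IsStrictOrderedRing 𝕜]
    {s : Set 𝕜} {g : 𝕜 → 𝕜} (hg : ConcaveOn 𝕜 s g) {u v d : 𝕜} (hu : u ∈ s) (hvd : v + d ∈ s)
    (huv : u ≤ v) (hd : 0 ≤ d) : g (v + d) - g v ≤ g (u + d) - g u := by
  rcases hd.eq_or_lt with rfl | hd
  · simp
  have hs := convex_iff_ordConnected.1 hg.1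
  have hv : v ∈ s := hs.out hu hvd ⟨huv, by linarith⟩
  have hud : u + d ∈ s := hs.out hu hvd ⟨by linarith, by linarith⟩
  have hu_lt : u < v + d := by linarith
  have h₁ : slope g u (v + d) ≤ slope g u (u + d) :=
    hg.slope_anti hu ⟨hud, (lt_add_of_pos_right u hd).ne'⟩ ⟨hvd, hu_lt.ne'⟩ (by linarith)
  have h₂ : slope g (v + d) v ≤ slope g (v + d) u :=
    hg.slope_anti hvd ⟨hu, hu_lt.ne⟩ ⟨hv, (lt_add_of_pos_right v hd).ne⟩ huv
  have hslope : slope g v (v + d) ≤ slope g u (u + d) :=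
    calc slope g v (v + d) = slope g (v + d) v := slope_comm g v (v + d)
      _ ≤ slope g (v + d) u := h₂
      _ = slope g u (v + d) := slope_comm g (v + d) u
      _ ≤ slope g u (u + d) := h₁
  rwa [slope_def_field, slope_def_field, add_sub_cancel_left, add_sub_cancel_left,
    div_le_div_iff_of_pos_right hd] at hslope

theorem mul_le_mul_of_concaveOn_log {f : ℝ → ℝ} (hpos : ∀ x, 0 < f x)
    (hlc : ConcaveOn ℝ univ (fun x => Real.log (f x))) {u v d : ℝ} (huv : u ≤ v) (hd : 0 ≤ d) :
    f (v + d) * f u ≤ f v * f (u + d) := by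
  have h := hlc.add_sub_le_add_sub (mem_univ u) (mem_univ (v + d)) huv hd
  rw [← Real.log_le_log_iff (mul_pos (hpos _) (hpos _)) (mul_pos (hpos _) (hpos _)),
    Real.log_mul (hpos _).ne' (hpos _).ne',
    Real.log_mul (hpos _).ne' (hpos _).ne']
  linarith

theorem setIntegral_Iic_comp_add_right {E : Type*} [NormedAddCommGroup E] [NormedSpace ℝ E]
    (f : ℝ → E) (x c : ℝ) : ∫ t in Iic x, f (t + c) = ∫ t in Iic (x + c), f t := by
  have h := (measurePreserving_add_right volume c).setIntegral_preimage_emb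
    (MeasurableEquiv.addRight c).measurableEmbedding f (Iic (x + c))
  rwa [show (· + c) ⁻¹' Iic (x + c) = Iic x by ext; simp] at h

theorem mul_integral_Iic_le_of_concaveOn_log {f : ℝ → ℝ} (hfi : Integrable f)
    (hpos : ∀ x, 0 < f x) (hlc : ConcaveOn ℝ univ (fun x => Real.log (f x))) {x y : ℝ}
    (hxy : x ≤ y) : f y * ∫ t in Iic x, f t ≤ f x * ∫ t in Iic y, f t := by
  have hshift : Integrable (fun t => f (t + (y - x))) := hfi.comp_add_right _
  calc f y * ∫ t in Iic x, f t = ∫ t in Iic x, f (x + (y - x)) * f t := by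
        rw [add_sub_cancel, integral_const_mul]
    _ ≤ ∫ t in Iic x, f x * f (t + (y - x)) :=
        setIntegral_mono_on (hfi.integrableOn.const_mul _) (hshift.integrableOn.const_mul _)
          measurableSet_Iic fun t ht => mul_le_mul_of_concaveOn_log hpos hlc ht (by linarith)
    _ = f x * ∫ t in Iic y, f t := by
        rw [integral_const_mul, setIntegral_Iic_comp_add_right, add_sub_cancel]

theorem integral_Iic_pos {f : ℝ → ℝ} {x : ℝ} (hfi : IntegrableOn f (Iic x))
    (hpos : ∀ t ≤ x, 0 < f t) : 0 < ∫ t in Iic x, f t := by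
  refine (setIntegral_pos_iff_support_of_nonneg_ae ?_ hfi).2 ?_
  · exact (ae_restrict_iff' measurableSet_Iic).2 (.of_forall fun t ht => (hpos t ht).le)
  · have hsupp : Iic x ⊆ Function.support f := fun t ht => (hpos t ht).ne'
    simp [inter_eq_right.2 hsupp]

theorem hasDerivAt_integral_Iic {E : Type*} [NormedAddCommGroup E] [NormedSpace ℝ E]
    [CompleteSpace E] {f : ℝ → E} (hfi : Integrable f) {x : ℝ} (hx : ContinuousAt f x) :
    HasDerivAt (fun u => ∫ t in Iic u, f t) (f x) x := by
  have h := (intervalIntegral.integral_hasDerivAt_right (hfi.intervalIntegrable (a := 0))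
    (hfi.aestronglyMeasurable.stronglyMeasurableAtFilter) hx).const_add (∫ t in Iic 0, f t)
  refine h.congr_of_eventuallyEq (.of_forall fun u => ?_)
  simp only [← intervalIntegral.integral_Iic_sub_Iic hfi.integrableOn hfi.integrableOn,
    add_sub_cancel]

theorem logConcave_cdf_of_logConcave_density_general
    (f : ℝ → ℝ) (hfpos : ∀ x, 0 < f x)
    (hflc : ConcaveOn ℝ univ (fun x => Real.log (f x)))
    (hfint : Integrable f) :
    ConcaveOn ℝ univ (fun x => Real.log (∫ y in Iic x, f y)) := by
  have hfcont : Continuous f := by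
    have hlog : Continuous fun x => Real.log (f x) :=
      continuousOn_univ.1 (hflc.continuousOn isOpen_univ)
    simpa only [Real.exp_log (hfpos _)] using hlog.rexp
  have hF : ∀ x, 0 < ∫ t in Iic x, f t := fun x =>
    integral_Iic_pos hfint.integrableOn fun t _ => hfpos t
  have hderiv : ∀ x, HasDerivAt (fun u => Real.log (∫ t in Iic u, f t))
      (f x / ∫ t in Iic x, f t) x := fun x =>
    (hasDerivAt_integral_Iic hfint hfcont.continuousAt).log (hF x).ne'
  refine Antitone.concaveOn_univ_of_deriv (fun x => (hderiv x).differentiableAt) ?_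
  intro x y hxy
  rw [(hderiv x).deriv, (hderiv y).deriv, div_le_div_iff₀ (hF y) (hF x)]
  exact mul_integral_Iic_le_of_concaveOn_log hfint hfpos hflc hxy

/-- The CDF of a positive log-concave probability density is log-concave. -/
theorem logConcave_cdf_of_logConcave_density
    (f : ℝ → ℝ) (hfmeas : Measurable f) (hfpos : ∀ x, 0 < f x)
    (hflc : ConcaveOn ℝ univ (fun x => Real.log (f x)))
    (hfint : Integrable f) (hfprob : ∫ x, f x = 1) :
    ConcaveOn ℝ univ (fun x => Real.log (∫ y in Iic x, f y)) :=
  logConcave_cdf_of_logConcave_density_general f hfpos hflc hfint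
end

section
/- Let $f_V:\mathbb{R}\to(0,\infty)$ be a log-concave probability density with right derivative $f'_V$, and let $f_U:\mathbb{R}\to(0,\infty)$ be positive. Then for every $w\in\mathbb{R}$, $\int_{\mathbb{R}}\int_{\mathbb{R}}(v_2-v_1)\left(\frac{f'_V(v_1)}{f_V(v_1)}-\frac{f'_V(v_2)}{f_V(v_2)}\right)f_U(w-v_1)f_U(w-v_2)f_V(v_1)f_V(v_2)\,dv_1\,dv_2 > 0$, provided the integral is well-defined. -/
/-!
The logarithmic derivative `s = f'_V / f_V` of a log-concave density is the right derivative of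
the concave function `log f_V`, hence nonincreasing, so `(v₂ - v₁) (s v₁ - s v₂) ≥ 0` everywhere
and the integrand is nonnegative. If `s` were constant, `log f_V` would be affine and `f_V` an
exponential, which is not integrable. So `s b < s a` for some `a < b`, and the integrand is
positive on the quadrant `Iic a ×ˢ Ici b`, which has positive measure.
-/

open Set MeasureTheory Filter

namespace ConcaveOn

variable {f : ℝ → ℝ}

theorem le_slope_of_hasDerivWithinAt_Ioi (hf : ConcaveOn ℝ univ f) {x y d : ℝ}
    (hd : HasDerivWithinAt f d (Ioi y) y) (hxy : x < y) : d ≤ slope f x y := by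
  refine le_of_tendsto ((hasDerivWithinAt_iff_tendsto_slope' self_notMem_Ioi).mp hd) ?_
  filter_upwards [self_mem_nhdsWithin] with z (hyz : y < z)
  rw [slope_def_field, slope_def_field]
  exact hf.slope_anti_adjacent (mem_univ x) (mem_univ z) hxy hyz

theorem antitone_of_hasDerivWithinAt_Ioi {f' : ℝ → ℝ} (hf : ConcaveOn ℝ univ f)
    (hf' : ∀ x, HasDerivWithinAt f (f' x) (Ioi x) x) : Antitone f' := by
  intro x y hxy
  rcases hxy.eq_or_lt with rfl | hlt
  · rfl
  · exact (hf.le_slope_of_hasDerivWithinAt_Ioi (hf' y) hlt).trans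
      (hf.slope_le_of_hasDerivWithinAt_Ioi (mem_univ x) (mem_univ y) hlt (hf' x))

theorem eq_add_mul_of_hasDerivWithinAt_Ioi (hf : ConcaveOn ℝ univ f) {c : ℝ}
    (hc : ∀ x, HasDerivWithinAt f c (Ioi x) x) (x : ℝ) : f x = f 0 + c * x := by
  have hslope : ∀ {a b : ℝ}, a < b → f b - f a = c * (b - a) := by
    intro a b hab
    have h : slope f a b = c := le_antisymm
      (hf.slope_le_of_hasDerivWithinAt_Ioi (mem_univ a) (mem_univ b) hab (hc a))
      (hf.le_slope_of_hasDerivWithinAt_Ioi (hc b) hab)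
    rwa [slope_def_field, div_eq_iff (sub_ne_zero.mpr hab.ne')] at h
  rcases lt_trichotomy x 0 with hx | rfl | hx
  · linarith [hslope hx]
  · simp
  · linarith [hslope hx]

end ConcaveOn

theorem not_integrable_exp_add_mul (a c : ℝ) :
    ¬ Integrable (fun x => Real.exp (a + c * x)) := by
  intro h
  have hfin := h.measure_norm_ge_lt_top (Real.exp_pos a)
  have hge : ∀ x, 0 ≤ c * x → x ∈ {x | Real.exp a ≤ ‖Real.exp (a + c * x)‖} := fun x hx => by
    simpa only [mem_ofPred_eq, Real.norm_eq_abs, Real.abs_exp, Real.exp_le_exp, le_add_iff_nonneg_right] using hx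
  rcases le_total 0 c with hc | hc
  · exact (measure_mono_top (fun x hx => hge x (mul_nonneg hc hx)) Real.volume_Ici).not_lt hfin
  · exact (measure_mono_top (fun x hx => hge x (mul_nonneg_of_nonpos_of_nonpos hc hx))
      Real.volume_Iic).not_lt hfin

theorem ConcaveOn.exists_lt_of_integrable_exp {g s : ℝ → ℝ} (hg : ConcaveOn ℝ univ g)
    (hs : ∀ x, HasDerivWithinAt g (s x) (Ioi x) x) (hint : Integrable fun x => Real.exp (g x)) :
    ∃ a b, a < b ∧ s b < s a := by
  by_contra! hcon
  have hanti := hg.antitone_of_hasDerivWithinAt_Ioi hs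
  have hmono : Monotone s := monotone_iff_forall_lt.mpr hcon
  have hconst : ∀ x, s x = s 0 := fun x => (le_total x 0).elim
    (fun h => le_antisymm (hmono h) (hanti h)) (fun h => le_antisymm (hanti h) (hmono h))
  have haff := hg.eq_add_mul_of_hasDerivWithinAt_Ioi (fun x => hconst x ▸ hs x)
  exact not_integrable_exp_add_mul (g 0) (s 0)
    (hint.congr (ae_of_all _ fun x => congrArg Real.exp (haff x)))

theorem Antitone.integral_sub_mul_sub_mul_pos {s : ℝ → ℝ} {K : ℝ × ℝ → ℝ} (hs : Antitone s)
    {a b : ℝ} (hab : a < b) (hsab : s b < s a) (hK : ∀ p, 0 < K p)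
    (hint : Integrable fun p : ℝ × ℝ => (p.2 - p.1) * (s p.1 - s p.2) * K p) :
    0 < ∫ p : ℝ × ℝ, (p.2 - p.1) * (s p.1 - s p.2) * K p := by
  have hnn : ∀ x y, 0 ≤ (y - x) * (s x - s y) := fun x y => (le_total x y).elim
    (fun h => mul_nonneg (sub_nonneg.mpr h) (sub_nonneg.mpr (hs h)))
    (fun h => mul_nonneg_of_nonpos_of_nonpos (sub_nonpos.mpr h) (sub_nonpos.mpr (hs h)))
  rw [integral_pos_iff_support_of_nonneg (fun p => mul_nonneg (hnn p.1 p.2) (hK p).le) hint]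
  have hsupp : Iic a ×ˢ Ici b ⊆ Function.support
      fun p : ℝ × ℝ => (p.2 - p.1) * (s p.1 - s p.2) * K p := by
    rintro ⟨x, y⟩ ⟨hx : x ≤ a, hy : b ≤ y⟩
    have hxy : 0 < y - x := by linarith
    have hsxy : 0 < s x - s y := sub_pos.mpr ((hs hy).trans_lt (hsab.trans_le (hs hx)))
    exact (mul_pos (mul_pos hxy hsxy) (hK (x, y))).ne'
  refine lt_of_lt_of_le ?_ (measure_mono hsupp)
  simp [Measure.volume_eq_prod, Measure.prod_prod]

theorem efron_double_integral_pos_general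
    (fU fV fV' : ℝ → ℝ) (w : ℝ)
    (hVpos : ∀ x, 0 < fV x)
    (hVlc : ConcaveOn ℝ univ (fun x => Real.log (fV x)))
    (hVint : Integrable fV)
    (hV' : ∀ x, HasDerivWithinAt fV (fV' x) (Ici x) x)
    (hUpos : ∀ x, 0 < fU x)
    (hwell : Integrable (fun p : ℝ × ℝ =>
      (p.2 - p.1) * (fV' p.1 / fV p.1 - fV' p.2 / fV p.2) *
        (fU (w - p.1) * fU (w - p.2) * fV p.1 * fV p.2))) :
    0 < ∫ p : ℝ × ℝ,
      (p.2 - p.1) * (fV' p.1 / fV p.1 - fV' p.2 / fV p.2) *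
        (fU (w - p.1) * fU (w - p.2) * fV p.1 * fV p.2) := by
  have hscore : ∀ x, HasDerivWithinAt (fun x => Real.log (fV x)) (fV' x / fV x) (Ioi x) x :=
    fun x => ((hV' x).log (hVpos x).ne').mono Ioi_subset_Ici_self
  obtain ⟨a, b, hab, hlt⟩ := hVlc.exists_lt_of_integrable_exp hscore
    (by simpa only [Real.exp_log (hVpos _)] using hVint)
  refine (hVlc.antitone_of_hasDerivWithinAt_Ioi hscore).integral_sub_mul_sub_mul_pos hab hlt
    (fun p => ?_) hwell
  have := hUpos (w - p.1); have := hUpos (w - p.2); have := hVpos p.1; have := hVpos p.2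
  positivity

/-- Positivity of the key double integral in the proof of Efron's theorem: for a positive
log-concave density `fV` (with right derivative `f'V`, not constant score) and a positive
weight `fU`, the symmetrized double integral is positive whenever it is well defined. -/
theorem efron_double_integral_pos
    (fU fV fV' : ℝ → ℝ) (w : ℝ)
    (hVmeas : Measurable fV) (hVpos : ∀ x, 0 < fV x)
    (hVlc : ConcaveOn ℝ univ (fun x => Real.log (fV x)))
    (hVint : Integrable fV) (hVprob : ∫ x, fV x = 1)
    (hV' : ∀ x, HasDerivWithinAt fV (fV' x) (Ici x) x)
    (hUmeas : Measurable fU) (hUpos : ∀ x, 0 < fU x)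
    (hwell : Integrable (fun p : ℝ × ℝ =>
      (p.2 - p.1) * (fV' p.1 / fV p.1 - fV' p.2 / fV p.2) *
        (fU (w - p.1) * fU (w - p.2) * fV p.1 * fV p.2))) :
    0 < ∫ p : ℝ × ℝ,
      (p.2 - p.1) * (fV' p.1 / fV p.1 - fV' p.2 / fV p.2) *
        (fU (w - p.1) * fU (w - p.2) * fV p.1 * fV p.2) :=
  efron_double_integral_pos_general fU fV fV' w hVpos hVlc hVint hV' hUpos hwell
end

section
/- Let $\gamma_c>0$, $K\ge 2$, and let $P:\mathbb{R}\to\mathbb{R}$ be continuous with $P(0)=0$ and twice continuously differentiable on $\mathbb{R}\setminus\{0\}$. Suppose that for every $y\in\mathbb{R}$ the function $J(y;n_1,\ldots,n_K)=y\sum_{k=1}^K n_k-\sum_{k=1}^K P(n_k)-\frac{\gamma_c}{2}(\sum_{k=1}^K n_k)^2$ has a unique maximizer over $\mathbb{R}^K$. Then $P$ is strictly convex on $\mathbb{R}$. -/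
open Set


lemma convexOn_of_midpoint_aux (f : ℝ → ℝ) (hf : Continuous f)
    (hm : ∀ a b : ℝ, f ((a + b) / 2) ≤ (f a + f b) / 2) :
    ConvexOn ℝ univ f := by
  have key : ∀ x y : ℝ, x < y → ∀ a b : ℝ, 0 ≤ a → 0 ≤ b → a + b = 1 →
      f (a * x + b * y) ≤ a * f x + b * f y := by
    intro x y hxy a b ha hb hab
    by_contra hcon
    push_neg at hcon
    have ha' : 0 < a := by
      rcases ha.eq_or_lt with h | h
      · exfalso
        have hb1 : b = 1 := by linarith
        rw [← h, hb1] at hcon; simp at hcon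
      · exact h
    have hb' : 0 < b := by
      rcases hb.eq_or_lt with h | h
      · exfalso
        have ha1 : a = 1 := by linarith
        rw [← h, ha1] at hcon; simp at hcon
      · exact h
    have hyx : (0:ℝ) < y - x := sub_pos.mpr hxy
    set slope : ℝ := (f y - f x) / (y - x) with hslope
    obtain ⟨φ, hφ⟩ : ∃ φ : ℝ → ℝ, ∀ z, φ z = f z - (f x + slope * (z - x)) :=
      ⟨_, fun _ => rfl⟩
    have hsl : slope * (y - x) = f y - f x := div_mul_cancel₀ _ (ne_of_gt hyx)
    have hφx : φ x = 0 := by rw [hφ]; ring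
    have hφy : φ y = 0 := by rw [hφ]; linarith
    have hφm : ∀ u v : ℝ, φ ((u + v) / 2) ≤ (φ u + φ v) / 2 := by
      intro u v
      have h1 := hm u v
      have haff : f x + slope * ((u + v) / 2 - x)
          = ((f x + slope * (u - x)) + (f x + slope * (v - x))) / 2 := by ring
      rw [hφ, hφ, hφ]; linarith
    have hφcont : Continuous φ := by
      have : φ = fun z => f z - (f x + slope * (z - x)) := funext hφ
      rw [this]
      exact hf.sub (continuous_const.add (continuous_const.mul (continuous_id.sub continuous_const)))
    set z0 : ℝ := a * x + b * y with hz0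
    have hzx : z0 - x = b * (y - x) := by simp only [hz0]; linear_combination x * hab
    have hz0x : x < z0 := by nlinarith [mul_pos hb' hyx]
    have hz0y : z0 < y := by nlinarith [mul_pos ha' hyx]
    have hφz0 : 0 < φ z0 := by
      have h2 : f x + slope * (z0 - x) = a * f x + b * f y := by
        rw [hzx]; linear_combination b * hsl - f x * hab
      rw [hφ]; linarith
    -- maximum of φ on [x, y]
    obtain ⟨cm, hcmmem, hcmmax⟩ := isCompact_Icc.exists_isMaxOn (s := Icc x y)
      ⟨x, left_mem_Icc.mpr (le_of_lt hxy)⟩ hφcont.continuousOn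
    set S : Set ℝ := Icc x y ∩ {z | φ z = φ cm} with hS
    have hSclosed : IsClosed S := isClosed_Icc.inter (isClosed_eq hφcont continuous_const)
    have hSne : S.Nonempty := ⟨cm, hcmmem, rfl⟩
    have hSbdd : BddBelow S := ⟨x, fun z hz => hz.1.1⟩
    set c : ℝ := sInf S with hc
    have hcS : c ∈ S := hSclosed.csInf_mem hSne hSbdd
    have hcmax : ∀ w ∈ Icc x y, φ w ≤ φ c := by
      intro w hw; rw [hcS.2]; exact hcmmax hw
    have hMpos : 0 < φ c := lt_of_lt_of_le hφz0 (hcmax z0 ⟨le_of_lt hz0x, le_of_lt hz0y⟩)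
    have hcx : x < c := by
      rcases (hcS.1.1).lt_or_eq with h | h
      · exact h
      · exfalso; have hx0 := hφx; rw [h] at hx0; linarith
    have hcy : c < y := by
      rcases (hcS.1.2).lt_or_eq with h | h
      · exact h
      · exfalso; have hy0 := hφy; rw [← h] at hy0; linarith
    set δ : ℝ := min (c - x) (y - c) with hδdef
    have hδpos : 0 < δ := lt_min (sub_pos.mpr hcx) (sub_pos.mpr hcy)
    have hδ1 : δ ≤ c - x := min_le_left _ _
    have hδ2 : δ ≤ y - c := min_le_right _ _
    have humem : c - δ ∈ Icc x y := ⟨by linarith, by linarith⟩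
    have hvmem : c + δ ∈ Icc x y := ⟨by linarith, by linarith⟩
    have hmid : ((c - δ) + (c + δ)) / 2 = c := by ring
    have h3 := hφm (c - δ) (c + δ)
    rw [hmid] at h3
    have hu : φ (c - δ) = φ c := by
      have h4 := hcmax _ humem
      have h5 := hcmax _ hvmem
      have h6 : 2 * φ c ≤ φ (c - δ) + φ (c + δ) := by linarith
      linarith
    have huS : c - δ ∈ S := ⟨humem, show φ (c - δ) = φ cm from hu.trans hcS.2⟩
    have : c ≤ c - δ := csInf_le hSbdd huS
    linarith
  refine ⟨convex_univ, fun x _ y _ a b ha hb hab => ?_⟩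
  simp only [smul_eq_mul]
  rcases lt_trichotomy x y with h | h | h
  · exact key x y h a b ha hb hab
  · subst h
    have h1 : a * x + b * x = x := by linear_combination x * hab
    have h2 : a * f x + b * f x = f x := by linear_combination (f x) * hab
    rw [h1, h2]
  · have h1 : a * x + b * y = b * y + a * x := by ring
    have h2 : a * f x + b * f y = b * f y + a * f x := by ring
    rw [h1, h2]
    exact key y x h b a hb ha (by linarith)

lemma strictConvexOn_of_midpoint_aux (f : ℝ → ℝ) (hc : ConvexOn ℝ univ f)
    (hm : ∀ a b : ℝ, a ≠ b → 2 * f ((a + b) / 2) < f a + f b) :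
    StrictConvexOn ℝ univ f := by
  have key : ∀ x y : ℝ, x ≠ y → ∀ a : ℝ, 0 < a → a ≤ 1 / 2 →
      f (a * x + (1 - a) * y) < a * f x + (1 - a) * f y := by
    intro x y hxy a ha ha2
    rcases ha2.lt_or_eq with h | h
    · have h1 : a * x + (1 - a) * y = (2*a) * ((x + y) / 2) + (1 - 2*a) * y := by ring
      have h2 := hc.2 (mem_univ ((x + y) / 2)) (mem_univ y) (by linarith : (0:ℝ) ≤ 2*a)
        (by linarith : (0:ℝ) ≤ 1 - 2*a) (by ring : 2*a + (1 - 2*a) = 1)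
      simp only [smul_eq_mul] at h2
      have h3 := hm x y hxy
      have h4 : (2*a) * (2 * f ((x + y) / 2)) < (2*a) * (f x + f y) :=
        mul_lt_mul_of_pos_left h3 (by linarith)
      rw [h1]
      nlinarith [h2, h4]
    · subst h
      have h1 : (1/2 : ℝ) * x + (1 - 1/2) * y = (x + y) / 2 := by ring
      rw [h1]
      linarith [hm x y hxy]
  refine ⟨convex_univ, fun x _ y _ hxy a b ha hb hab => ?_⟩
  simp only [smul_eq_mul]
  rcases le_or_gt a (1/2) with h | h
  · have hb1 : b = 1 - a := by linarith
    rw [hb1]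
    exact key x y hxy a ha h
  · have hb2 : b ≤ 1/2 := by linarith
    have h1 : a * x + b * y = b * y + (1 - b) * x := by linear_combination x * hab
    have ha' : a = 1 - b := by linarith
    rw [h1, ha']
    linarith [key y x (Ne.symm hxy) b hb hb2]

/-- If for `K ≥ 2` dealers the client's goal function has a unique maximizer for every
type `y`, then the price schedule `P` is strictly convex. -/
theorem admissible_implies_strictConvex
    (γc : ℝ) (hγc : 0 < γc) (K : ℕ) (hK : 2 ≤ K)
    (P : ℝ → ℝ) (hPcont : Continuous P) (hP0 : P 0 = 0)
    (hPsmooth : ContDiffOn ℝ 2 P {(0 : ℝ)}ᶜ)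
    (J : ℝ → (Fin K → ℝ) → ℝ)
    (hJ : ∀ y n, J y n = y * (∑ i, n i) - (∑ i, P (n i)) - γc / 2 * (∑ i, n i) ^ 2)
    (hunique : ∀ y : ℝ, ∃! n : Fin K → ℝ, ∀ m : Fin K → ℝ, J y m ≤ J y n) :
    StrictConvexOn ℝ univ P := by
  classical
  have hKR : (2:ℝ) ≤ (K:ℝ) := by exact_mod_cast hK
  have hKpos : (0:ℝ) < (K:ℝ) := by linarith
  have h0K : 0 < K := by omega
  have h1K : 1 < K := by omega
  set i0 : Fin K := ⟨0, h0K⟩ with hi0def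
  set i1 : Fin K := ⟨1, h1K⟩ with hi1def
  have hi01 : i0 ≠ i1 := by simp [hi0def, hi1def, Fin.ext_iff]
  have H : ∀ y : ℝ, ∃ n : Fin K → ℝ, (∀ m, J y m ≤ J y n) ∧
      ∀ m : Fin K → ℝ, (∀ m', J y m' ≤ J y m) → m = n := by
    intro y; obtain ⟨n, h1, h2⟩ := hunique y; exact ⟨n, h1, h2⟩
  choose N hNmax hNuniq using H
  have hNsym : ∀ y i, N y i = N y i0 := by
    intro y i
    have hs1 : (∑ j, N y (Equiv.swap i i0 j)) = ∑ j, N y j :=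
      Fintype.sum_equiv (Equiv.swap i i0) _ _ (fun j => rfl)
    have hs2 : (∑ j, P (N y (Equiv.swap i i0 j))) = ∑ j, P (N y j) :=
      Fintype.sum_equiv (Equiv.swap i i0) _ _ (fun j => rfl)
    have hJeq : J y (fun j => N y (Equiv.swap i i0 j)) = J y (N y) := by
      simp only [hJ]
      rw [hs1, hs2]
    have heq := hNuniq y (fun j => N y (Equiv.swap i i0 j))
      (fun m => le_trans (hNmax y m) (le_of_eq hJeq.symm))
    have h := congrFun heq i0
    rw [Equiv.swap_apply_right] at h
    exact h
  set c : ℝ → ℝ := fun y => N y i0 with hcdef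
  have hNc : ∀ y, N y = fun _ => c y := fun y => funext fun i => hNsym y i
  obtain ⟨g0, hg0⟩ : ∃ g : ℝ → ℝ, ∀ m, g m = P m + γc * (K:ℝ) / 2 * m ^ 2 :=
    ⟨_, fun _ => rfl⟩
  have hg0cont : Continuous g0 := by
    have hfe : g0 = fun m => P m + γc * (K:ℝ) / 2 * m ^ 2 := funext hg0
    rw [hfe]
    exact hPcont.add (continuous_const.mul (continuous_pow 2))
  have hJconst : ∀ y m : ℝ, J y (fun _ => m) = -(K:ℝ) * (g0 m - y * m) := by
    intro y m
    rw [hJ]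
    simp only [Finset.sum_const, Finset.card_univ, Fintype.card_fin, nsmul_eq_mul]
    rw [hg0]; ring
  have hmin : ∀ y m : ℝ, g0 (c y) - y * c y ≤ g0 m - y * m := by
    intro y m
    have h := hNmax y (fun _ => m)
    rw [hJconst y m, hNc y, hJconst y (c y)] at h
    by_contra hcon
    push_neg at hcon
    nlinarith [h, mul_pos hKpos (sub_pos.mpr hcon)]
  have hstrict : ∀ y m : ℝ, m ≠ c y → g0 (c y) - y * c y < g0 m - y * m := by
    intro y m hm
    rcases (hmin y m).lt_or_eq with h | h
    · exact h
    · exfalso; apply hm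
      have heq : J y (fun _ => m) = J y (N y) := by
        rw [hJconst y m, hNc y, hJconst y (c y), h]
      have h2 := hNuniq y (fun _ => m)
        (fun m' => le_trans (hNmax y m') (le_of_eq heq.symm))
      exact congrFun h2 i0
  have hmid_at : ∀ y a b : ℝ, a + b = 2 * c y → a ≠ b → 2 * P (c y) < P a + P b := by
    intro y a b hab hne
    set v : Fin K → ℝ := fun i => if i = i0 then a else if i = i1 then b else c y with hvdef
    have h10 : i1 ≠ i0 := Ne.symm hi01
    have hv0 : v i0 = a := by simp [hvdef]
    have hv1 : v i1 = b := by simp [hvdef, h10]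
    have hmem1 : i1 ∈ Finset.univ.erase i0 :=
      Finset.mem_erase.mpr ⟨Ne.symm hi01, Finset.mem_univ _⟩
    have hcast : ((K - 2 : ℕ) : ℝ) = (K:ℝ) - 2 := by
      rw [Nat.cast_sub hK]; norm_num
    have hsumv : ∀ φ : ℝ → ℝ, (∑ i, φ (v i)) = φ a + φ b + ((K:ℝ) - 2) * φ (c y) := by
      intro φ
      rw [← Finset.add_sum_erase _ _ (Finset.mem_univ i0),
        ← Finset.add_sum_erase _ _ hmem1]
      have hrest : ∀ i ∈ (Finset.univ.erase i0).erase i1, φ (v i) = φ (c y) := by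
        intro i hi
        rw [Finset.mem_erase, Finset.mem_erase] at hi
        simp [hvdef, hi.1, hi.2.1]
      have hcard : ((Finset.univ.erase i0).erase i1).card = K - 2 := by
        rw [Finset.card_erase_of_mem hmem1,
          Finset.card_erase_of_mem (Finset.mem_univ _), Finset.card_univ, Fintype.card_fin]
        omega
      rw [Finset.sum_congr rfl hrest, Finset.sum_const, hcard, nsmul_eq_mul, hcast, hv0, hv1]
      ring
    have hvne : v ≠ N y := by
      intro h
      apply hne
      have h0 := congrFun h i0
      have h1 := congrFun h i1
      rw [hv0] at h0; rw [hv1] at h1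
      rw [hNsym y i1] at h1
      exact h0.trans h1.symm
    have hlt : J y v < J y (N y) := by
      rcases (hNmax y v).lt_or_eq with h | h
      · exact h
      · exact absurd (hNuniq y v (fun m => le_trans (hNmax y m) (le_of_eq h.symm))) hvne
    have hsv : (∑ i, v i) = (K:ℝ) * c y := by
      have h := hsumv id
      simp only [id_eq] at h
      rw [h]; linear_combination hab
    have hsP : (∑ i, P (v i)) = P a + P b + ((K:ℝ) - 2) * P (c y) := hsumv P
    rw [hJ, hsv, hsP, hNc y, hJconst y (c y), hg0] at hlt
    nlinarith [hlt]
  have hmono : ∀ y1 y2 : ℝ, y1 ≤ y2 → c y1 ≤ c y2 := by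
    intro y1 y2 h12
    rcases h12.lt_or_eq with h | h
    · by_contra hcon
      push_neg at hcon
      have A := hmin y1 (c y2)
      have B := hmin y2 (c y1)
      nlinarith [mul_pos (sub_pos.mpr h) (sub_pos.mpr hcon)]
    · rw [h]
  have hminval : ∀ m, g0 (c 0) ≤ g0 m := by
    intro m; have h := hmin 0 m; simpa using h
  have hup : ∀ t : ℝ, ∃ y, t < c y := by
    intro t
    refine ⟨max 1 (g0 (t + 2) - g0 (c 0)), ?_⟩
    set y := max 1 (g0 (t + 2) - g0 (c 0)) with hydef
    have hy1 : (1:ℝ) ≤ y := le_max_left _ _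
    have hy2 : g0 (t + 2) - g0 (c 0) ≤ y := le_max_right _ _
    have h1 := hmin y (t + 2)
    have h2 := hminval (c y)
    by_contra hcon
    push_neg at hcon
    have h3 : (2:ℝ) ≤ (t + 2) - c y := by linarith
    have h4 := mul_le_mul_of_nonneg_left h3 (by linarith : (0:ℝ) ≤ y)
    nlinarith [h1, h2, h4]
  have hdown : ∀ t : ℝ, ∃ y, c y < t := by
    intro t
    refine ⟨min (-1) (g0 (c 0) - g0 (t - 2)), ?_⟩
    set y := min (-1) (g0 (c 0) - g0 (t - 2)) with hydef
    have hy1 : y ≤ -1 := min_le_left _ _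
    have hy2 : y ≤ g0 (c 0) - g0 (t - 2) := min_le_right _ _
    have h1 := hmin y (t - 2)
    have h2 := hminval (c y)
    by_contra hcon
    push_neg at hcon
    have h3 : (t - 2) - c y ≤ -2 := by linarith
    have h4 := mul_le_mul_of_nonpos_left h3 (by linarith : y ≤ 0)
    nlinarith [h1, h2, h4]
  have hsurj : ∀ t : ℝ, ∃ y, c y = t := by
    intro t
    by_contra hcon
    push_neg at hcon
    obtain ⟨yd, hyd⟩ := hdown t
    obtain ⟨yu, hyu⟩ := hup t
    have hAne : {y : ℝ | c y < t}.Nonempty := ⟨yd, hyd⟩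
    have hAbdd : BddAbove {y : ℝ | c y < t} := by
      refine ⟨yu, fun y hy => ?_⟩
      by_contra hgt
      push_neg at hgt
      have := hmono yu y hgt.le
      have hyt : c y < t := hy
      linarith
    set ys := sSup {y : ℝ | c y < t} with hysdef
    rcases (hcon ys).lt_or_gt with hcys | hcys
    · -- c ys < t : approach from the right
      have hseqB : ∀ k : ℕ, t < c (ys + 1/((k:ℝ)+1)) := by
        intro k
        have hpos : (0:ℝ) < 1/((k:ℝ)+1) := by positivity
        rcases (hcon (ys + 1/((k:ℝ)+1))).lt_or_gt with h | h
        · exfalso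
          have hle : ys + 1/((k:ℝ)+1) ≤ ys := by
            rw [hysdef]
            exact le_csSup hAbdd h
          linarith
        · exact h
      have hanti : Antitone (fun k : ℕ => c (ys + 1/((k:ℝ)+1))) := by
        intro k1 k2 hk
        apply hmono
        have hk1 : (0:ℝ) < (k1:ℝ) + 1 := by positivity
        have hkk : ((k1:ℝ)+1) ≤ (k2:ℝ)+1 := by
          have : (k1:ℝ) ≤ (k2:ℝ) := Nat.cast_le.mpr hk
          linarith
        have := one_div_le_one_div_of_le hk1 hkk
        linarith
      have hbdd : BddBelow (Set.range fun k : ℕ => c (ys + 1/((k:ℝ)+1))) := by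
        refine ⟨t, ?_⟩
        rintro x ⟨k, rfl⟩
        exact (hseqB k).le
      have htend := tendsto_atTop_ciInf hanti hbdd
      set L := ⨅ k : ℕ, c (ys + 1/((k:ℝ)+1)) with hLdef
      have hLt : t ≤ L := le_ciInf fun k => (hseqB k).le
      have hytend : Filter.Tendsto (fun k : ℕ => ys + 1/((k:ℝ)+1))
          Filter.atTop (nhds ys) := by
        simpa using (tendsto_const_nhds :
          Filter.Tendsto (fun _ : ℕ => ys) Filter.atTop (nhds ys)).add
          tendsto_one_div_add_atTop_nhds_zero_nat
      have hkey : ∀ m, g0 L - ys * L ≤ g0 m - ys * m := by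
        intro m
        exact le_of_tendsto_of_tendsto'
          (((hg0cont.tendsto L).comp htend).sub (hytend.mul htend))
          (tendsto_const_nhds.sub (hytend.mul tendsto_const_nhds))
          (fun k => hmin (ys + 1/((k:ℝ)+1)) m)
      have hLne : L ≠ c ys := fun h => by rw [h] at hLt; linarith
      have hs := hstrict ys L hLne
      have hk := hkey (c ys)
      linarith
    · -- t < c ys : approach from the left
      have hseqA : ∀ k : ℕ, c (ys - 1/((k:ℝ)+1)) < t := by
        intro k
        have hpos : (0:ℝ) < 1/((k:ℝ)+1) := by positivity
        have hlt : ys - 1/((k:ℝ)+1) < sSup {y : ℝ | c y < t} := by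
          rw [← hysdef]; linarith
        obtain ⟨a, haA, hak⟩ := exists_lt_of_lt_csSup hAne hlt
        have haA' : c a < t := haA
        exact lt_of_le_of_lt (hmono _ a hak.le) haA'
      have hmonoseq : Monotone (fun k : ℕ => c (ys - 1/((k:ℝ)+1))) := by
        intro k1 k2 hk
        apply hmono
        have hk1 : (0:ℝ) < (k1:ℝ) + 1 := by positivity
        have hkk : ((k1:ℝ)+1) ≤ (k2:ℝ)+1 := by
          have : (k1:ℝ) ≤ (k2:ℝ) := Nat.cast_le.mpr hk
          linarith
        have := one_div_le_one_div_of_le hk1 hkk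
        linarith
      have hbdd : BddAbove (Set.range fun k : ℕ => c (ys - 1/((k:ℝ)+1))) := by
        refine ⟨t, ?_⟩
        rintro x ⟨k, rfl⟩
        exact (hseqA k).le
      have htend := tendsto_atTop_ciSup hmonoseq hbdd
      set L := ⨆ k : ℕ, c (ys - 1/((k:ℝ)+1)) with hLdef
      have hLt : L ≤ t := ciSup_le fun k => (hseqA k).le
      have hytend : Filter.Tendsto (fun k : ℕ => ys - 1/((k:ℝ)+1))
          Filter.atTop (nhds ys) := by
        simpa using (tendsto_const_nhds :
          Filter.Tendsto (fun _ : ℕ => ys) Filter.atTop (nhds ys)).sub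
          tendsto_one_div_add_atTop_nhds_zero_nat
      have hkey : ∀ m, g0 L - ys * L ≤ g0 m - ys * m := by
        intro m
        exact le_of_tendsto_of_tendsto'
          (((hg0cont.tendsto L).comp htend).sub (hytend.mul htend))
          (tendsto_const_nhds.sub (hytend.mul tendsto_const_nhds))
          (fun k => hmin (ys - 1/((k:ℝ)+1)) m)
      have hLne : L ≠ c ys := fun h => by rw [h] at hLt; linarith
      have hs := hstrict ys L hLne
      have hk := hkey (c ys)
      linarith
  have hmidpt : ∀ a b : ℝ, a ≠ b → 2 * P ((a + b) / 2) < P a + P b := by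
    intro a b hne
    obtain ⟨y, hy⟩ := hsurj ((a + b) / 2)
    have h := hmid_at y a b (by rw [hy]; ring) hne
    rwa [hy] at h
  have hconv : ConvexOn ℝ univ P := by
    apply convexOn_of_midpoint_aux P hPcont
    intro a b
    rcases eq_or_ne a b with h | h
    · subst h; rw [show (a + a)/2 = a by ring]; linarith
    · linarith [hmidpt a b h]
  exact strictConvexOn_of_midpoint_aux P hconv hmidpt
end

section
/- Let $\gamma_c>0$ and let $P:\mathbb{R}\to\mathbb{R}$ be continuous with $P(0)=0$ and continuously differentiable on $\mathbb{R}\setminus\{0\}$. Then for every $y\in\mathbb{R}$ the function $n\mapsto yn-P(n)-\frac{\gamma_c}{2}n^2$ has a unique maximizer over $\mathbb{R}$ if and only if $n\mapsto \frac{\gamma_c}{2}n^2+P(n)$ is strictly convex on $\mathbb{R}$ and $\lim_{n\to\pm\infty}(\gamma_c n+P'(n))=\pm\infty$. -/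
/-!
With `f n = γc / 2 * n ^ 2 + P n`, a maximizer `n` of `y * n - P n - γc / 2 * n ^ 2` is a point
where `y` is a subgradient of `f`. If every slope `y` has exactly one such point `N y`, then `N`
is monotone, unbounded in both directions (as `f` is bounded below on compacts) and continuous
(the subgradient relation is closed, so a jump of `N` would produce a slope with two supporting
points). Hence `N` is onto, every point carries a strict supporting line, and `f` is strictly
convex; then `f'` is a subgradient, and monotonicity of the subdifferential forces `f' n ≥ y`
beyond `N y`. Conversely, tangent lines at far-out points where `f' ≤ y`, resp. `f' ≥ y`, confine
the maximization of `y * m - f m` to a compact interval, and strict convexity makes the maximizer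
unique.
-/

open Set Filter Topology

/-- The maximization form of "`y` is a subgradient of `f` at `n`". -/
def HasSubgradientAt (f : ℝ → ℝ) (y n : ℝ) : Prop :=
  ∀ m, y * m - f m ≤ y * n - f n

namespace HasSubgradientAt

variable {f : ℝ → ℝ} {y n : ℝ}

lemma comp_neg (h : HasSubgradientAt f y n) : HasSubgradientAt (fun x => f (-x)) (-y) (-n) :=
  fun m => by simpa using h (-m)

lemma sub_mul_sub_nonneg {y₁ y₂ n₁ n₂ : ℝ} (h₁ : HasSubgradientAt f y₁ n₁)
    (h₂ : HasSubgradientAt f y₂ n₂) : 0 ≤ (y₂ - y₁) * (n₂ - n₁) := by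
  nlinarith [h₁ n₂, h₂ n₁]

lemma lt_of_ne (h : HasSubgradientAt f y n) (hu : ∀ n', HasSubgradientAt f y n' → n' = n)
    {m : ℝ} (hm : m ≠ n) : y * m - f m < y * n - f n :=
  (h m).lt_of_ne fun heq => hm <| hu m fun m' => (h m').trans heq.ge

lemma of_tendsto {ι : Type*} {l : Filter ι} [l.NeBot] {y' n' : ι → ℝ} (hf : Continuous f)
    (hy : Tendsto y' l (𝓝 y)) (hn : Tendsto n' l (𝓝 n))
    (h : ∀ᶠ i in l, HasSubgradientAt f (y' i) (n' i)) : HasSubgradientAt f y n := fun m =>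
  le_of_tendsto_of_tendsto ((hy.mul_const m).sub tendsto_const_nhds)
    ((hy.mul hn).sub ((hf.tendsto n).comp hn)) (h.mono fun _ hi => hi m)

end HasSubgradientAt

lemma ConvexOn.hasSubgradientAt_of_hasDerivAt {f : ℝ → ℝ} {f' a : ℝ} (hf : ConvexOn ℝ univ f)
    (hd : HasDerivAt f f' a) : HasSubgradientAt f f' a := by
  intro m
  rcases lt_trichotomy m a with hm | rfl | hm
  · have := hf.slope_le_of_hasDerivAt (mem_univ m) (mem_univ a) hm hd
    rw [slope_def_field, div_le_iff₀ (sub_pos.2 hm)] at this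
    linarith
  · exact le_rfl
  · have := hf.le_slope_of_hasDerivAt (mem_univ a) (mem_univ m) hm hd
    rw [slope_def_field, le_div_iff₀ (sub_pos.2 hm)] at this
    linarith

lemma StrictConvexOn.eq_of_hasSubgradientAt {f : ℝ → ℝ} {y n₁ n₂ : ℝ}
    (hf : StrictConvexOn ℝ univ f) (h₁ : HasSubgradientAt f y n₁)
    (h₂ : HasSubgradientAt f y n₂) : n₁ = n₂ := by
  by_contra hne
  have hmid := hf.2 (mem_univ n₁) (mem_univ n₂) hne one_half_pos one_half_pos (add_halves 1)
  simp only [smul_eq_mul] at hmid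
  linarith [h₁ (1 / 2 * n₁ + 1 / 2 * n₂), h₂ n₁]

lemma exists_hasSubgradientAt_of_le {f : ℝ → ℝ} {a b y₁ y₂ y : ℝ} (hf : ContinuousOn f (Icc a b))
    (hab : a ≤ b) (ha : HasSubgradientAt f y₁ a) (hb : HasSubgradientAt f y₂ b)
    (hy₁ : y₁ ≤ y) (hy₂ : y ≤ y₂) : ∃ n, HasSubgradientAt f y n := by
  obtain ⟨n, -, hmax⟩ := isCompact_Icc.exists_isMaxOn (f := fun m => y * m - f m)
    (nonempty_Icc.2 hab) ((continuousOn_const.mul continuousOn_id).sub hf)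
  refine ⟨n, fun m => ?_⟩
  rcases lt_or_ge m a with hma | ham
  · have : y * a - f a ≤ y * n - f n := hmax (left_mem_Icc.2 hab)
    nlinarith [ha m, mul_nonneg (sub_nonneg.2 hy₁) (sub_nonneg.2 hma.le)]
  rcases le_or_gt m b with hmb | hbm
  · exact hmax ⟨ham, hmb⟩
  · have : y * b - f b ≤ y * n - f n := hmax (right_mem_Icc.2 hab)
    nlinarith [hb m, mul_nonneg (sub_nonneg.2 hy₂) (sub_nonneg.2 hbm.le)]

section Selection

variable {f N : ℝ → ℝ} (hN : ∀ y, HasSubgradientAt f y (N y))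
include hN

lemma monotone_of_forall_hasSubgradientAt : Monotone N := by
  refine monotone_iff_forall_lt.2 fun y₁ y₂ hy => ?_
  by_contra! hlt
  nlinarith [(hN y₁).sub_mul_sub_nonneg (hN y₂), mul_pos (sub_pos.2 hy) (sub_pos.2 hlt)]

variable (hf : Continuous f)
include hf

lemma tendsto_atTop_of_forall_hasSubgradientAt : Tendsto N atTop atTop := by
  refine (monotone_of_forall_hasSubgradientAt hN).tendsto_atTop_atTop fun c => ?_
  by_contra! hlt
  obtain ⟨C, hC⟩ := (isCompact_Icc.image hf : IsCompact (f '' Icc (N 0) c)).bddBelow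
  set y := max 0 (f (c + 1) - C) + 1
  have hy : 0 ≤ y := by positivity
  have hfN : C ≤ f (N y) :=
    hC ⟨N y, ⟨monotone_of_forall_hasSubgradientAt hN hy, (hlt y).le⟩, rfl⟩
  -- the supporting line at `N y` has slope `y` yet lies below `f` at `c + 1 ≥ N y + 1`
  nlinarith [hN y (c + 1), hlt y, le_max_right 0 (f (c + 1) - C)]

lemma tendsto_atBot_of_forall_hasSubgradientAt : Tendsto N atBot atBot := by
  have := tendsto_atTop_of_forall_hasSubgradientAt (f := fun x => f (-x)) (N := fun y => -N (-y))
    (fun y => by simpa using (hN (-y)).comp_neg) (by fun_prop)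
  simpa [Function.comp_def] using tendsto_neg_atTop_atBot.comp (this.comp tendsto_neg_atBot_atTop)

lemma continuous_of_forall_hasSubgradientAt (hu : ∀ y n, HasSubgradientAt f y n → n = N y) :
    Continuous N := by
  have hmono := monotone_of_forall_hasSubgradientAt hN
  refine continuous_iff_continuousAt.2 fun y => ?_
  have hlim : ∀ l ≤ 𝓝 y, l.NeBot → ∀ L, Tendsto N l (𝓝 L) → L = N y := fun l hl _ L hL =>
    hu y L <| .of_tendsto hf (tendsto_id.mono_left hl) hL (.of_forall hN)
  rw [hmono.continuousAt_iff_leftLim_eq_rightLim,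
    hlim _ nhdsWithin_le_nhds inferInstance _ (hmono.tendsto_leftLim y),
    hlim _ nhdsWithin_le_nhds inferInstance _ (hmono.tendsto_rightLim y)]

end Selection

lemma strictConvexOn_univ_of_forall_exists_strict_support {f : ℝ → ℝ}
    (h : ∀ c, ∃ y, ∀ m ≠ c, y * m - f m < y * c - f c) : StrictConvexOn ℝ univ f := by
  refine ⟨convex_univ, fun x _ z _ hxz a b ha hb hab => ?_⟩
  obtain rfl : b = 1 - a := by linarith
  simp only [smul_eq_mul]
  obtain ⟨y, hy⟩ := h (a * x + (1 - a) * z)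
  have hx : x ≠ a * x + (1 - a) * z := sub_ne_zero.1 <| by
    rw [show x - (a * x + (1 - a) * z) = (1 - a) * (x - z) by ring]
    exact mul_ne_zero hb.ne' (sub_ne_zero.2 hxz)
  have hz : z ≠ a * x + (1 - a) * z := sub_ne_zero.1 <| by
    rw [show z - (a * x + (1 - a) * z) = a * (z - x) by ring]
    exact mul_ne_zero ha.ne' (sub_ne_zero.2 hxz.symm)
  linarith [mul_lt_mul_of_pos_left (hy x hx) ha, mul_lt_mul_of_pos_left (hy z hz) hb]

lemma strictConvexOn_of_forall_existsUnique_hasSubgradientAt {f : ℝ → ℝ} (hf : Continuous f)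
    (H : ∀ y, ∃! n, HasSubgradientAt f y n) : StrictConvexOn ℝ univ f := by
  choose N hN hu using H
  have hsurj : Function.Surjective N :=
    (continuous_of_forall_hasSubgradientAt hN hf hu).surjective
      (tendsto_atTop_of_forall_hasSubgradientAt hN hf)
      (tendsto_atBot_of_forall_hasSubgradientAt hN hf)
  refine strictConvexOn_univ_of_forall_exists_strict_support fun c => ?_
  obtain ⟨y, rfl⟩ := hsurj c
  exact ⟨y, fun m hm => (hN y).lt_of_ne (hu y) hm⟩

section Slopes

variable {f g : ℝ → ℝ} (hex : ∀ y, ∃ n, HasSubgradientAt f y n)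
include hex

lemma tendsto_atTop_of_eventually_hasSubgradientAt
    (hg : ∀ᶠ n in atTop, HasSubgradientAt f (g n) n) : Tendsto g atTop atTop := by
  refine tendsto_atTop.2 fun y => ?_
  obtain ⟨n₀, h₀⟩ := hex y
  filter_upwards [hg, eventually_gt_atTop n₀] with n hn hlt
  nlinarith [h₀.sub_mul_sub_nonneg hn]

lemma tendsto_atBot_of_eventually_hasSubgradientAt
    (hg : ∀ᶠ n in atBot, HasSubgradientAt f (g n) n) : Tendsto g atBot atBot := by
  refine tendsto_atBot.2 fun y => ?_
  obtain ⟨n₀, h₀⟩ := hex y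
  filter_upwards [hg, eventually_lt_atBot n₀] with n hn hlt
  nlinarith [h₀.sub_mul_sub_nonneg hn]

end Slopes

theorem forall_existsUnique_hasSubgradientAt_iff {f f' : ℝ → ℝ} (hf : Continuous f)
    (htop : ∀ᶠ n in atTop, HasDerivAt f (f' n) n) (hbot : ∀ᶠ n in atBot, HasDerivAt f (f' n) n) :
    (∀ y, ∃! n, HasSubgradientAt f y n) ↔
      StrictConvexOn ℝ univ f ∧ Tendsto f' atTop atTop ∧ Tendsto f' atBot atBot := by
  constructor
  · intro H
    have hconv := strictConvexOn_of_forall_existsUnique_hasSubgradientAt hf H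
    have hsub {l : Filter ℝ} (h : ∀ᶠ n in l, HasDerivAt f (f' n) n) :
        ∀ᶠ n in l, HasSubgradientAt f (f' n) n :=
      h.mono fun _ hn => hconv.convexOn.hasSubgradientAt_of_hasDerivAt hn
    exact ⟨hconv, tendsto_atTop_of_eventually_hasSubgradientAt (fun y => (H y).exists) (hsub htop),
      tendsto_atBot_of_eventually_hasSubgradientAt (fun y => (H y).exists) (hsub hbot)⟩
  · rintro ⟨hconv, hf'top, hf'bot⟩ y
    obtain ⟨b, hb, hb₀, hby⟩ :=
      (htop.and ((eventually_ge_atTop 0).and (hf'top.eventually_ge_atTop y))).exists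
    obtain ⟨a, ha, ha₀, hay⟩ :=
      (hbot.and ((eventually_le_atBot 0).and (hf'bot.eventually_le_atBot y))).exists
    obtain ⟨n, hn⟩ := exists_hasSubgradientAt_of_le hf.continuousOn (ha₀.trans hb₀)
      (hconv.convexOn.hasSubgradientAt_of_hasDerivAt ha)
      (hconv.convexOn.hasSubgradientAt_of_hasDerivAt hb) hay hby
    exact ⟨n, hn, fun n' hn' => hconv.eq_of_hasSubgradientAt hn' hn⟩

theorem monopolist_admissibility_characterization_general
    (γc : ℝ)
    (P : ℝ → ℝ) (hPcont : Continuous P)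
    (hPsmooth : ContDiffOn ℝ 1 P {(0 : ℝ)}ᶜ) :
    (∀ y : ℝ, ∃! n : ℝ, ∀ m : ℝ,
        y * m - P m - γc / 2 * m ^ 2 ≤ y * n - P n - γc / 2 * n ^ 2) ↔
      (StrictConvexOn ℝ univ (fun n => γc / 2 * n ^ 2 + P n) ∧
        Tendsto (fun n => γc * n + deriv P n) atTop atTop ∧
        Tendsto (fun n => γc * n + deriv P n) atBot atBot) := by
  have hderiv (n : ℝ) (hn : n ≠ 0) :
      HasDerivAt (fun n => γc / 2 * n ^ 2 + P n) (γc * n + deriv P n) n := by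
    have hP := (hPsmooth.differentiableOn one_ne_zero).differentiableAt
      (isOpen_compl_singleton.mem_nhds hn)
    exact (((hasDerivAt_pow 2 n).const_mul (γc / 2)).add hP.hasDerivAt).congr_deriv (by ring)
  have hobj (y m : ℝ) : y * m - P m - γc / 2 * m ^ 2 = y * m - (γc / 2 * m ^ 2 + P m) := by
    ring
  simp only [hobj]
  exact forall_existsUnique_hasSubgradientAt_iff (by fun_prop)
    ((eventually_gt_atTop 0).mono fun n hn => hderiv n hn.ne')
    ((eventually_lt_atBot 0).mono fun n hn => hderiv n hn.ne)

/-- Characterization of admissible price schedules for a monopolist dealer: the client's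
problem has a unique maximizer for every type `y` iff `n ↦ γc/2 n² + P(n)` is strictly
convex and `γc n + P'(n) → ±∞` as `n → ±∞`. -/
theorem monopolist_admissibility_characterization
    (γc : ℝ) (hγc : 0 < γc)
    (P : ℝ → ℝ) (hPcont : Continuous P) (hP0 : P 0 = 0)
    (hPsmooth : ContDiffOn ℝ 1 P {(0 : ℝ)}ᶜ) :
    (∀ y : ℝ, ∃! n : ℝ, ∀ m : ℝ,
        y * m - P m - γc / 2 * m ^ 2 ≤ y * n - P n - γc / 2 * n ^ 2) ↔
      (StrictConvexOn ℝ univ (fun n => γc / 2 * n ^ 2 + P n) ∧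
        Tendsto (fun n => γc * n + deriv P n) atTop atTop ∧
        Tendsto (fun n => γc * n + deriv P n) atBot atBot) :=
  monopolist_admissibility_characterization_general γc P hPcont hPsmooth
end

section
/- Let $I=[0,\infty)$, let $v,w:I\to\mathbb{R}$ be differentiable with $v\le w$, set $\Gamma=\{(x,y):x\in I, v(x)\le y\le w(x)\}$, and let $\alpha:\Gamma\to\mathbb{R}$ be continuous with continuous partial derivative $\alpha_y$ on $\Gamma$. If $w'(x)-\alpha(x,w(x))\le 0\le v'(x)-\alpha(x,v(x))$ for all $x\in I$, then there exists a differentiable function $\phi:I\to\mathbb{R}$ with $v\le\phi\le w$ and $\phi'(x)=\alpha(x,\phi(x))$ for all $x\in I$. -/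
/-!
Clamping `y` into `[v x, w x]` extends `α` to a right-hand side `F` that is bounded and uniformly
Lipschitz in `y` on every strip `[0, b] × ℝ`, and equals `α (x, w x)` above `w` and `α (x, v x)`
below `v`. For `F`, the graphs of `w` and `v` are barriers backward in time: a solution through a
point of `[v b, w b]` at time `b` stays between `v` and `w` on `[0, b]`. Let `lo n` and `hi n` be
the solutions through `v n` and `w n` at time `n`. Solutions cannot cross, so every `lo m 0` lies
below every `hi n 0`, and some `y₀` lies between all of them. The solution starting at `y₀` is
squeezed between `lo n` and `hi n` on `[0, n]` for every `n`, hence between `v` and `w` for all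
time, where `F` agrees with `α`.
-/

open Set Topology
open scoped NNReal

theorem exists_mem_Ioc_eq_zero_forall_pos {f : ℝ → ℝ} {a b : ℝ} (hab : a ≤ b)
    (hf : ContinuousOn f (Icc a b)) (ha : 0 < f a) (hb : f b ≤ 0) :
    ∃ s ∈ Ioc a b, f s = 0 ∧ ∀ t ∈ Ico a s, 0 < f t := by
  set S := Icc a b ∩ f ⁻¹' Iic 0
  have hSbdd : BddBelow S := bddBelow_Icc.mono inter_subset_left
  have hsS : sInf S ∈ S :=
    (hf.preimage_isClosed_of_isClosed isClosed_Icc isClosed_Iic).csInf_mem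
      ⟨b, right_mem_Icc.2 hab, hb⟩ hSbdd
  have hpos : ∀ t ∈ Ico a (sInf S), 0 < f t := fun t ht => by
    by_contra! h
    exact ht.2.not_ge (csInf_le hSbdd ⟨⟨ht.1, ht.2.le.trans hsS.1.2⟩, h⟩)
  have has : a < sInf S := hsS.1.1.lt_of_ne fun h => (h ▸ ha).not_ge hsS.2
  refine ⟨sInf S, ⟨has, hsS.1.2⟩, ?_, hpos⟩
  obtain ⟨z, hz, hfz⟩ := intermediate_value_Icc' has.le
    (hf.mono (Icc_subset_Icc_right hsS.1.2)) ⟨hsS.2, ha.le⟩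
  rcases hz.2.eq_or_lt with h | h
  · rwa [← h]
  · exact absurd hfz (hpos z ⟨hz.1, h⟩).ne'

/-- A backward barrier: `f - g` cannot decrease while `g < f`, so `f > g` somewhere in `[a, b]`
would persist up to `b`. -/
theorem le_on_Icc_of_right_le {f g f' g' : ℝ → ℝ} {a b : ℝ}
    (hf : ContinuousOn f (Icc a b)) (hg : ContinuousOn g (Icc a b))
    (hf' : ∀ t ∈ Ioo a b, HasDerivAt f (f' t) t) (hg' : ∀ t ∈ Ioo a b, HasDerivAt g (g' t) t)
    (hderiv : ∀ t ∈ Ioo a b, g t < f t → g' t ≤ f' t) (hb : f b ≤ g b) :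
    ∀ t ∈ Icc a b, f t ≤ g t := by
  intro t₀ ht₀
  by_contra! h
  obtain ⟨s, hs, hfs, hpos⟩ := exists_mem_Ioc_eq_zero_forall_pos (f := f - g) ht₀.2
    ((hf.sub hg).mono (Icc_subset_Icc_left ht₀.1)) (sub_pos.2 h) (sub_nonpos.2 hb)
  have hsub : Ioo t₀ s ⊆ Ioo a b := Ioo_subset_Ioo ht₀.1 hs.2
  have hmono : MonotoneOn (f - g) (Icc t₀ s) := by
    refine monotoneOn_of_hasDerivWithinAt_nonneg (f' := f' - g') (convex_Icc _ _)
      ((hf.sub hg).mono (Icc_subset_Icc ht₀.1 hs.2)) (fun t ht => ?_) (fun t ht => ?_)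
    all_goals rw [interior_Icc] at ht
    · exact ((hf' t (hsub ht)).sub (hg' t (hsub ht))).hasDerivWithinAt
    · exact sub_nonneg.2 (hderiv t (hsub ht) (sub_pos.1 (hpos t ⟨ht.1.le, ht.2⟩)))
  have := hmono (left_mem_Icc.2 hs.1.le) (right_mem_Icc.2 hs.1.le) hs.1.le
  simp only [Pi.sub_apply] at this hfs
  linarith

section ODE

variable {E : Type*} [NormedAddCommGroup E] [NormedSpace ℝ E]

def IsODESolutionOn (F : ℝ → E → E) (f : ℝ → E) (s : Set ℝ) : Prop :=
  ∀ t ∈ s, HasDerivWithinAt f (F t (f t)) s t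

variable {F : ℝ → E → E} {f g : ℝ → E} {s s' : Set ℝ} {a b : ℝ} {K : ℝ≥0}

theorem IsODESolutionOn.mono (hf : IsODESolutionOn F f s) (hs : s' ⊆ s) :
    IsODESolutionOn F f s' :=
  fun t ht => (hf t (hs ht)).mono hs

theorem IsODESolutionOn.continuousOn (hf : IsODESolutionOn F f s) : ContinuousOn f s :=
  fun t ht => (hf t ht).continuousWithinAt

theorem IsODESolutionOn.hasDerivAt (hf : IsODESolutionOn F f s) {t : ℝ} (hs : s ∈ 𝓝 t) :
    HasDerivAt f (F t (f t)) t :=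
  (hf t (mem_of_mem_nhds hs)).hasDerivAt hs

/-- Picard–Lindelöf: since `F` is bounded on all of `[a, b] × E`, the solution through any point
of `[a, b]` exists on the whole interval. -/
theorem exists_isODESolutionOn_Icc [CompleteSpace E] {t₀ C : ℝ}
    (hc : ∀ y, ContinuousOn (F · y) (Icc a b)) (hK : ∀ t ∈ Icc a b, LipschitzWith K (F t))
    (hC : ∀ t ∈ Icc a b, ∀ y, ‖F t y‖ ≤ C) (ht₀ : t₀ ∈ Icc a b) (y₀ : E) :
    ∃ f : ℝ → E, f t₀ = y₀ ∧ IsODESolutionOn F f (Icc a b) := by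
  have hpl : IsPicardLindelof F ⟨t₀, ht₀⟩ y₀ (C.toNNReal * (b - a).toNNReal) 0 C.toNNReal K :=
    { lipschitzOnWith := fun t ht => (hK t ht).lipschitzOnWith
      continuousOn := fun y _ => hc y
      norm_le := fun t ht y _ => (hC t ht y).trans (Real.le_coe_toNNReal C)
      mul_max_le := by
        have : max (b - t₀) (t₀ - a) ≤ b - a := max_le (by linarith [ht₀.1]) (by linarith [ht₀.2])
        simpa [Real.coe_toNNReal _ (sub_nonneg.2 (ht₀.1.trans ht₀.2))] using
          mul_le_mul_of_nonneg_left this C.toNNReal.coe_nonneg }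
  exact hpl.exists_eq_forall_mem_Icc_hasDerivWithinAt₀

theorem IsODESolutionOn.eqOn_of_left_eq (hK : ∀ t ∈ Icc a b, LipschitzWith K (F t))
    (hf : IsODESolutionOn F f (Icc a b)) (hg : IsODESolutionOn F g (Icc a b)) (ha : f a = g a) :
    EqOn f g (Icc a b) :=
  ODE_solution_unique_of_mem_Icc_right (s := fun _ => univ)
    (fun t ht => (hK t (Ico_subset_Icc_self ht)).lipschitzOnWith) hf.continuousOn
    (fun t ht => (hf t (Ico_subset_Icc_self ht)).mono_of_mem_nhdsWithin (Icc_mem_nhdsGE_of_mem ht))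
    (fun _ _ => trivial) hg.continuousOn
    (fun t ht => (hg t (Ico_subset_Icc_self ht)).mono_of_mem_nhdsWithin (Icc_mem_nhdsGE_of_mem ht))
    (fun _ _ => trivial) ha

theorem IsODESolutionOn.eqOn_of_right_eq (hK : ∀ t ∈ Icc a b, LipschitzWith K (F t))
    (hf : IsODESolutionOn F f (Icc a b)) (hg : IsODESolutionOn F g (Icc a b)) (hb : f b = g b) :
    EqOn f g (Icc a b) :=
  ODE_solution_unique_of_mem_Icc_left (s := fun _ => univ)
    (fun t ht => (hK t (Ioc_subset_Icc_self ht)).lipschitzOnWith) hf.continuousOn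
    (fun t ht => (hf t (Ioc_subset_Icc_self ht)).mono_of_mem_nhdsWithin (Icc_mem_nhdsLE_of_mem ht))
    (fun _ _ => trivial) hg.continuousOn
    (fun t ht => (hg t (Ioc_subset_Icc_self ht)).mono_of_mem_nhdsWithin (Icc_mem_nhdsLE_of_mem ht))
    (fun _ _ => trivial) hb

theorem isODESolutionOn_Ici_of_nat {f : ℕ → ℝ → E}
    (hf : ∀ n, IsODESolutionOn F (f n) (Icc 0 n))
    (hagree : ∀ m n, m ≤ n → EqOn (f m) (f n) (Icc 0 m)) :
    IsODESolutionOn F (fun x => f ⌈x⌉₊ x) (Ici 0) := by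
  intro x hx
  set N := ⌈x⌉₊ + 1
  have hxN : x < N := by push_cast [N]; linarith [Nat.le_ceil x]
  have heq : EqOn (fun y => f ⌈y⌉₊ y) (f N) (Icc 0 N) := fun y hy =>
    hagree _ _ (Nat.ceil_le.2 hy.2) ⟨hy.1, Nat.le_ceil y⟩
  have hxmem : x ∈ Icc (0 : ℝ) N := ⟨hx, hxN.le⟩
  rw [heq hxmem]
  refine ((hf N x hxmem).congr heq (heq hxmem)).mono_of_mem_nhdsWithin ?_
  rw [← Ici_inter_Iic]
  exact inter_mem_nhdsWithin _ (Iic_mem_nhds hxN)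

end ODE

section ScalarODE

variable {F : ℝ → ℝ → ℝ} {f g : ℝ → ℝ} {a b : ℝ} {K : ℝ≥0}

theorem IsODESolutionOn.le_of_right_le (hK : ∀ t ∈ Icc a b, LipschitzWith K (F t))
    (hf : IsODESolutionOn F f (Icc a b)) (hg : IsODESolutionOn F g (Icc a b)) (hb : f b ≤ g b) :
    ∀ t ∈ Icc a b, f t ≤ g t := by
  intro t₀ ht₀
  by_contra! h
  obtain ⟨s, hs, hfs, -⟩ := exists_mem_Ioc_eq_zero_forall_pos (f := f - g) ht₀.2
    ((hf.continuousOn.sub hg.continuousOn).mono (Icc_subset_Icc_left ht₀.1))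
    (sub_pos.2 h) (sub_nonpos.2 hb)
  have hsub : Icc t₀ s ⊆ Icc a b := Icc_subset_Icc ht₀.1 hs.2
  have := (hf.mono hsub).eqOn_of_right_eq (fun t ht => hK t (hsub ht)) (hg.mono hsub)
    (sub_eq_zero.1 hfs) (left_mem_Icc.2 hs.1.le)
  exact h.ne' this

theorem IsODESolutionOn.le_of_left_le (hK : ∀ t ∈ Icc a b, LipschitzWith K (F t))
    (hf : IsODESolutionOn F f (Icc a b)) (hg : IsODESolutionOn F g (Icc a b)) (ha : f a ≤ g a) :
    ∀ t ∈ Icc a b, f t ≤ g t := by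
  intro t ht
  by_contra! h
  have hsub : Icc a t ⊆ Icc a b := Icc_subset_Icc_right ht.2
  have hga : g a ≤ f a := (hg.mono hsub).le_of_right_le (fun t ht => hK t (hsub ht))
    (hf.mono hsub) h.le a (left_mem_Icc.2 ht.1)
  exact h.ne' (hf.eqOn_of_left_eq hK hg (ha.antisymm hga) ht)

end ScalarODE

section Barriers

variable {F : ℝ → ℝ → ℝ} {v w v' w' : ℝ → ℝ}

theorem IsODESolutionOn.mem_strip_of_right_mem {f : ℝ → ℝ} {b : ℝ}
    (hv : ∀ x ∈ Ici (0 : ℝ), HasDerivWithinAt v (v' x) (Ici 0) x)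
    (hw : ∀ x ∈ Ici (0 : ℝ), HasDerivWithinAt w (w' x) (Ici 0) x)
    (hFv : ∀ t ∈ Ici (0 : ℝ), ∀ y < v t, F t y ≤ v' t)
    (hFw : ∀ t ∈ Ici (0 : ℝ), ∀ y, w t < y → w' t ≤ F t y)
    (hf : IsODESolutionOn F f (Icc 0 b)) (hvb : v b ≤ f b) (hwb : f b ≤ w b) :
    ∀ t ∈ Icc 0 b, v t ≤ f t ∧ f t ≤ w t := by
  have hvc : ContinuousOn v (Icc 0 b) := fun t ht =>
    (hv t ht.1).continuousWithinAt.mono Icc_subset_Ici_self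
  have hwc : ContinuousOn w (Icc 0 b) := fun t ht =>
    (hw t ht.1).continuousWithinAt.mono Icc_subset_Ici_self
  have hv' : ∀ t ∈ Ioo 0 b, HasDerivAt v (v' t) t := fun t ht =>
    (hv t ht.1.le).hasDerivAt (Ici_mem_nhds ht.1)
  have hw' : ∀ t ∈ Ioo 0 b, HasDerivAt w (w' t) t := fun t ht =>
    (hw t ht.1.le).hasDerivAt (Ici_mem_nhds ht.1)
  have hf' : ∀ t ∈ Ioo 0 b, HasDerivAt f (F t (f t)) t := fun t ht =>
    hf.hasDerivAt (Icc_mem_nhds ht.1 ht.2)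
  exact fun t ht =>
    ⟨le_on_Icc_of_right_le hvc hf.continuousOn hv' hf' (fun t ht => hFv t ht.1.le _) hvb t ht,
      le_on_Icc_of_right_le hf.continuousOn hwc hf' hw' (fun t ht => hFw t ht.1.le _) hwb t ht⟩

theorem exists_isODESolutionOn_Icc_of_bounded
    (hFc : ∀ y, ContinuousOn (F · y) (Ici 0))
    (hFlip : ∀ b, ∃ K, ∀ t ∈ Icc (0 : ℝ) b, LipschitzWith K (F t))
    (hFbdd : ∀ b, ∃ C, ∀ t ∈ Icc (0 : ℝ) b, ∀ y, ‖F t y‖ ≤ C) {b t₀ : ℝ} (ht₀ : t₀ ∈ Icc 0 b)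
    (y₀ : ℝ) : ∃ f, f t₀ = y₀ ∧ IsODESolutionOn F f (Icc 0 b) := by
  obtain ⟨K, hK⟩ := hFlip b
  obtain ⟨C, hC⟩ := hFbdd b
  exact exists_isODESolutionOn_Icc (fun y => (hFc y).mono Icc_subset_Ici_self) hK hC ht₀ y₀

theorem exists_forall_isODESolutionOn_mem_strip
    (hFc : ∀ y, ContinuousOn (F · y) (Ici 0))
    (hFlip : ∀ b, ∃ K, ∀ t ∈ Icc (0 : ℝ) b, LipschitzWith K (F t))
    (hFbdd : ∀ b, ∃ C, ∀ t ∈ Icc (0 : ℝ) b, ∀ y, ‖F t y‖ ≤ C)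
    (hv : ∀ x ∈ Ici (0 : ℝ), HasDerivWithinAt v (v' x) (Ici 0) x)
    (hw : ∀ x ∈ Ici (0 : ℝ), HasDerivWithinAt w (w' x) (Ici 0) x)
    (hvw : ∀ x ∈ Ici (0 : ℝ), v x ≤ w x)
    (hFv : ∀ t ∈ Ici (0 : ℝ), ∀ y < v t, F t y ≤ v' t)
    (hFw : ∀ t ∈ Ici (0 : ℝ), ∀ y, w t < y → w' t ≤ F t y) :
    ∃ y₀, ∀ (n : ℕ) (φ : ℝ → ℝ), IsODESolutionOn F φ (Icc 0 n) → φ 0 = y₀ →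
      ∀ t ∈ Icc (0 : ℝ) n, v t ≤ φ t ∧ φ t ≤ w t := by
  have hsol (n : ℕ) (y : ℝ) := exists_isODESolutionOn_Icc_of_bounded hFc hFlip hFbdd
    (right_mem_Icc.2 (Nat.cast_nonneg (α := ℝ) n)) y
  choose lo hlo_end hlo using fun n : ℕ => hsol n (v n)
  choose hi hhi_end hhi using fun n : ℕ => hsol n (w n)
  have hvw_nat (n : ℕ) : v n ≤ w n := hvw n (mem_Ici.2 n.cast_nonneg)
  have hlo_mem (n : ℕ) := (hlo n).mem_strip_of_right_mem hv hw hFv hFw (hlo_end n).ge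
    ((hlo_end n).trans_le (hvw_nat n))
  have hhi_mem (n : ℕ) := (hhi n).mem_strip_of_right_mem hv hw hFv hFw
    ((hvw_nat n).trans_eq (hhi_end n).symm) (hhi_end n).le
  have hcross (m n : ℕ) : lo m 0 ≤ hi n 0 := by
    obtain ⟨K, hK⟩ := hFlip (min m n : ℕ)
    have hsub (k : ℕ) (hk : min m n ≤ k) : Icc (0 : ℝ) (min m n : ℕ) ⊆ Icc 0 k :=
      Icc_subset_Icc_right (Nat.cast_le.2 hk)
    refine ((hlo m).mono (hsub m (min_le_left m n))).le_of_right_le hK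
      ((hhi n).mono (hsub n (min_le_right m n))) ?_ 0 (left_mem_Icc.2 (Nat.cast_nonneg _))
    rcases le_total m n with h | h
    · rw [min_eq_left h, hlo_end]
      exact (hhi_mem n m ⟨m.cast_nonneg, Nat.cast_le.2 h⟩).1
    · rw [min_eq_right h, hhi_end]
      exact (hlo_mem m n ⟨n.cast_nonneg, Nat.cast_le.2 h⟩).2
  refine ⟨⨆ m, lo m 0, fun n φ hφ hφ₀ t ht => ?_⟩
  obtain ⟨K, hK⟩ := hFlip n
  have hlo_le : lo n 0 ≤ φ 0 := hφ₀ ▸ le_ciSup ⟨hi 0 0, forall_mem_range.2 (hcross · 0)⟩ n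
  have hle_hi : φ 0 ≤ hi n 0 := hφ₀ ▸ ciSup_le (hcross · n)
  exact ⟨(hlo_mem n t ht).1.trans ((hlo n).le_of_left_le hK hφ hlo_le t ht),
    (hφ.le_of_left_le hK (hhi n) hle_hi t ht).trans (hhi_mem n t ht).2⟩

theorem exists_isODESolutionOn_Ici_mem_strip
    (hFc : ∀ y, ContinuousOn (F · y) (Ici 0))
    (hFlip : ∀ b, ∃ K, ∀ t ∈ Icc (0 : ℝ) b, LipschitzWith K (F t))
    (hFbdd : ∀ b, ∃ C, ∀ t ∈ Icc (0 : ℝ) b, ∀ y, ‖F t y‖ ≤ C)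
    (hv : ∀ x ∈ Ici (0 : ℝ), HasDerivWithinAt v (v' x) (Ici 0) x)
    (hw : ∀ x ∈ Ici (0 : ℝ), HasDerivWithinAt w (w' x) (Ici 0) x)
    (hvw : ∀ x ∈ Ici (0 : ℝ), v x ≤ w x)
    (hFv : ∀ t ∈ Ici (0 : ℝ), ∀ y < v t, F t y ≤ v' t)
    (hFw : ∀ t ∈ Ici (0 : ℝ), ∀ y, w t < y → w' t ≤ F t y) :
    ∃ φ : ℝ → ℝ, (∀ x ∈ Ici (0 : ℝ), v x ≤ φ x ∧ φ x ≤ w x) ∧ IsODESolutionOn F φ (Ici 0) := by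
  obtain ⟨y₀, hy₀⟩ := exists_forall_isODESolutionOn_mem_strip hFc hFlip hFbdd hv hw hvw hFv hFw
  choose φ hφ₀ hφ using fun n : ℕ =>
    exists_isODESolutionOn_Icc_of_bounded hFc hFlip hFbdd (left_mem_Icc.2 n.cast_nonneg) y₀
  refine ⟨fun x => φ ⌈x⌉₊ x, fun x hx => hy₀ _ _ (hφ _) (hφ₀ _) x ⟨hx, Nat.le_ceil x⟩,
    isODESolutionOn_Ici_of_nat hφ fun m n hmn => ?_⟩
  obtain ⟨K, hK⟩ := hFlip m
  exact (hφ m).eqOn_of_left_eq hK ((hφ n).mono (Icc_subset_Icc_right (Nat.cast_le.2 hmn)))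
    ((hφ₀ m).trans (hφ₀ n).symm)

end Barriers

theorem LipschitzOnWith.lipschitzWith_comp_max_min {g : ℝ → ℝ} {K : ℝ≥0} {a b : ℝ}
    (hab : a ≤ b) (hg : LipschitzOnWith K g (Icc a b)) :
    LipschitzWith K fun y => g (max a (min y b)) := by
  have := hg.comp ((LipschitzWith.id.min_const b).const_max a).lipschitzOnWith (s := univ)
    fun y _ => ⟨le_max_left _ _, max_le hab (min_le_right _ _)⟩
  rw [mul_one, lipschitzOnWith_univ] at this
  exact this

def strip (s : Set ℝ) (v w : ℝ → ℝ) : Set (ℝ × ℝ) :=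
  {p | p.1 ∈ s ∧ v p.1 ≤ p.2 ∧ p.2 ≤ w p.1}

section Extension

variable {v w : ℝ → ℝ} {α : ℝ × ℝ → ℝ}

theorem isCompact_strip {a b : ℝ} (hv : ContinuousOn v (Icc a b))
    (hw : ContinuousOn w (Icc a b)) : IsCompact (strip (Icc a b) v w) := by
  obtain ⟨m, hm⟩ := isCompact_Icc.bddBelow_image hv
  obtain ⟨M, hM⟩ := isCompact_Icc.bddAbove_image hw
  have hfst : MapsTo Prod.fst (Icc a b ×ˢ (univ : Set ℝ)) (Icc a b) := fun p hp => hp.1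
  have hclosed := ((isClosed_Icc.prod isClosed_univ).isClosed_le
    (hv.comp continuousOn_fst hfst) continuousOn_snd).isClosed_le continuousOn_snd
    ((hw.comp continuousOn_fst hfst).mono (sep_subset _ _))
  refine (isCompact_Icc.prod (isCompact_Icc (a := m) (b := M))).of_isClosed_subset
    (by convert hclosed using 1; ext p; simp [strip, and_assoc]) fun p hp => ⟨hp.1, ?_, ?_⟩
  · exact (hm ⟨p.1, hp.1, rfl⟩).trans hp.2.1
  · exact hp.2.2.trans (hM ⟨p.1, hp.1, rfl⟩)

theorem ContinuousOn.exists_bound_strip {g : ℝ × ℝ → ℝ} (hg : ContinuousOn g (strip (Ici 0) v w))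
    (hv : ContinuousOn v (Ici 0)) (hw : ContinuousOn w (Ici 0)) (b : ℝ) :
    ∃ C, ∀ t ∈ Icc 0 b, ∀ y ∈ Icc (v t) (w t), ‖g (t, y)‖ ≤ C := by
  obtain ⟨C, hC⟩ := (isCompact_strip (hv.mono Icc_subset_Ici_self)
    (hw.mono Icc_subset_Ici_self)).exists_bound_of_continuousOn
    (hg.mono fun p hp => ⟨hp.1.1, hp.2⟩)
  exact ⟨C, fun t ht y hy => hC (t, y) ⟨ht, hy⟩⟩

def stripExtend (v w : ℝ → ℝ) (α : ℝ × ℝ → ℝ) (t y : ℝ) : ℝ :=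
  α (t, max (v t) (min y (w t)))

theorem stripExtend_of_mem {t y : ℝ} (hy : y ∈ Icc (v t) (w t)) :
    stripExtend v w α t y = α (t, y) := by
  rw [stripExtend, min_eq_left hy.2, max_eq_right hy.1]

theorem stripExtend_of_lt {t y : ℝ} (hy : y < v t) : stripExtend v w α t y = α (t, v t) := by
  rw [stripExtend, max_eq_left ((min_le_left _ _).trans hy.le)]

theorem stripExtend_of_gt {t y : ℝ} (hvw : v t ≤ w t) (hy : w t < y) :
    stripExtend v w α t y = α (t, w t) := by
  rw [stripExtend, min_eq_right hy.le, max_eq_right hvw]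

theorem mk_max_min_mem_strip {s : Set ℝ} {t : ℝ} (ht : t ∈ s) (hvw : v t ≤ w t) (y : ℝ) :
    (t, max (v t) (min y (w t))) ∈ strip s v w :=
  ⟨ht, le_max_left _ _, max_le hvw (min_le_right _ _)⟩

theorem continuousOn_stripExtend (hα : ContinuousOn α (strip (Ici 0) v w))
    (hv : ContinuousOn v (Ici 0)) (hw : ContinuousOn w (Ici 0))
    (hvw : ∀ x ∈ Ici (0 : ℝ), v x ≤ w x) (y : ℝ) :
    ContinuousOn (stripExtend v w α · y) (Ici 0) :=
  hα.comp (continuousOn_id.prodMk (hv.sup (continuousOn_const.inf hw)))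
    fun t ht => mk_max_min_mem_strip ht (hvw t ht) y

theorem exists_norm_stripExtend_le (hα : ContinuousOn α (strip (Ici 0) v w))
    (hv : ContinuousOn v (Ici 0)) (hw : ContinuousOn w (Ici 0))
    (hvw : ∀ x ∈ Ici (0 : ℝ), v x ≤ w x) (b : ℝ) :
    ∃ C, ∀ t ∈ Icc 0 b, ∀ y, ‖stripExtend v w α t y‖ ≤ C := by
  obtain ⟨C, hC⟩ := hα.exists_bound_strip hv hw b
  exact ⟨C, fun t ht y => hC t ht _ (mk_max_min_mem_strip ht.1 (hvw t ht.1) y).2⟩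

theorem exists_lipschitzWith_stripExtend {αy : ℝ × ℝ → ℝ}
    (hαy : ∀ p ∈ strip (Ici 0) v w, HasDerivWithinAt (fun y => α (p.1, y)) (αy p)
      (Icc (v p.1) (w p.1)) p.2)
    (hαyc : ContinuousOn αy (strip (Ici 0) v w))
    (hv : ContinuousOn v (Ici 0)) (hw : ContinuousOn w (Ici 0))
    (hvw : ∀ x ∈ Ici (0 : ℝ), v x ≤ w x) (b : ℝ) :
    ∃ K, ∀ t ∈ Icc 0 b, LipschitzWith K (stripExtend v w α t) := by
  obtain ⟨L, hL⟩ := hαyc.exists_bound_strip hv hw b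
  refine ⟨L.toNNReal, fun t ht => LipschitzOnWith.lipschitzWith_comp_max_min
    (g := fun z => α (t, z)) (hvw t ht.1) ?_⟩
  refine (convex_Icc _ _).lipschitzOnWith_of_nnnorm_hasDerivWithin_le
    (fun z hz => hαy (t, z) ⟨ht.1, hz⟩) fun z hz => ?_
  rw [← norm_toNNReal]
  exact Real.toNNReal_le_toNNReal (hL t ht z hz)

end Extension

/-- Existence of a global solution to `y' = α(x,y)` on `[0,∞)` trapped between a lower
solution `v` and an upper solution `w`. -/
theorem ode_existence_between_lower_upper_solutions
    (v w v' w' : ℝ → ℝ)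
    (hv : ∀ x ∈ Ici (0 : ℝ), HasDerivWithinAt v (v' x) (Ici 0) x)
    (hw : ∀ x ∈ Ici (0 : ℝ), HasDerivWithinAt w (w' x) (Ici 0) x)
    (hvw : ∀ x ∈ Ici (0 : ℝ), v x ≤ w x)
    (Γ : Set (ℝ × ℝ))
    (hΓ : Γ = {p : ℝ × ℝ | p.1 ∈ Ici (0 : ℝ) ∧ v p.1 ≤ p.2 ∧ p.2 ≤ w p.1})
    (α αy : ℝ × ℝ → ℝ)
    (hαcont : ContinuousOn α Γ)
    (hαy : ∀ p ∈ Γ, HasDerivWithinAt (fun y => α (p.1, y)) (αy p)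
      (Icc (v p.1) (w p.1)) p.2)
    (hαycont : ContinuousOn αy Γ)
    (hupper : ∀ x ∈ Ici (0 : ℝ), w' x - α (x, w x) ≤ 0)
    (hlower : ∀ x ∈ Ici (0 : ℝ), 0 ≤ v' x - α (x, v x)) :
    ∃ φ : ℝ → ℝ, (∀ x ∈ Ici (0 : ℝ), v x ≤ φ x ∧ φ x ≤ w x) ∧
      ∀ x ∈ Ici (0 : ℝ), HasDerivWithinAt φ (α (x, φ x)) (Ici 0) x := by
  subst hΓ
  have hvc : ContinuousOn v (Ici 0) := fun x hx => (hv x hx).continuousWithinAt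
  have hwc : ContinuousOn w (Ici 0) := fun x hx => (hw x hx).continuousWithinAt
  obtain ⟨φ, hφ_mem, hφ⟩ := exists_isODESolutionOn_Ici_mem_strip
    (continuousOn_stripExtend hαcont hvc hwc hvw)
    (exists_lipschitzWith_stripExtend hαy hαycont hvc hwc hvw)
    (exists_norm_stripExtend_le hαcont hvc hwc hvw) hv hw hvw
    (fun t ht y hy => by linarith [stripExtend_of_lt (α := α) (w := w) hy, hlower t ht])
    (fun t ht y hy => by linarith [stripExtend_of_gt (α := α) (hvw t ht) hy, hupper t ht])
  refine ⟨φ, hφ_mem, fun x hx => ?_⟩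
  simpa only [stripExtend_of_mem (hφ_mem x hx)] using hφ x hx
end
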